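/- Let D be the self-adjoint operator on ℓ²(ℤ) given by (D f)(j) = j·f(j) with domain dom D = {f ∈ ℓ²(ℤ) : Σ_{j∈ℤ} j²·|f(j)|² < ∞}, and let ε_j denote the standard orthonormal basis vectors of ℓ²(ℤ). Let n ∈ ℕ, let x be a bounded operator on ℓ²(ℤ), and let y : ℕ → B(ℓ²(ℤ)) satisfy y 0 = x and, for every k < n: y k maps dom D into dom D and y (k+1) h = i·(D(y k h) − y k (D h)) for all h ∈ dom D. Then the matrix entries of the iterated weak derivatives are given by ⟨y k ε_c, ε_r⟩ = (i·(r − c))^k · ⟨x ε_c, ε_r⟩ for every k ≤ n and all r, c ∈ ℤ. -/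

import Mathlib

open scoped InnerProductSpace

noncomputable section

/-- The domain of the diagonal operator `D` on `ℓ²(ℤ)`: the sequences `f ∈ ℓ²(ℤ)` with
`Σ_{j ∈ ℤ} j² |f j|² < ∞`. -/
def diagDomain : Submodule ℂ (lp (fun _ : ℤ => ℂ) 2) where
  carrier := {f | Memℓp (fun j : ℤ => (j : ℂ) * f j) 2}
  zero_mem' := by
    simpa [← Pi.zero_def] using (zero_memℓp : Memℓp (0 : ∀ _ : ℤ, ℂ) 2)
  add_mem' := by
    intro f g hf hg
    show Memℓp (fun j : ℤ => (j : ℂ) * (f + g) j) 2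
    have h : (fun j : ℤ => (j : ℂ) * (f + g) j)
        = (fun j : ℤ => (j : ℂ) * f j) + fun j : ℤ => (j : ℂ) * g j := by
      funext j
      simp [lp.coeFn_add, mul_add]
    rw [h]
    exact hf.add hg
  smul_mem' := by
    intro c f hf
    show Memℓp (fun j : ℤ => (j : ℂ) * (c • f) j) 2
    have h : (fun j : ℤ => (j : ℂ) * (c • f) j)
        = fun j : ℤ => c * ((j : ℂ) * f j) := by
      funext j
      simp [lp.coeFn_smul, Pi.smul_apply, smul_eq_mul]
      ring
    rw [h]
    exact hf.const_mul c

/-- The self-adjoint diagonal operator `(D f) j = j • f j` on `ℓ²(ℤ)`, as a densely defined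
unbounded operator (`LinearPMap`) with domain `{f : Σ j² |f j|² < ∞}`. -/
def diagOp : lp (fun _ : ℤ => ℂ) 2 →ₗ.[ℂ] lp (fun _ : ℤ => ℂ) 2 where
  domain := diagDomain
  toFun :=
    { toFun := fun f => (⟨fun j : ℤ => (j : ℂ) * (f : lp (fun _ : ℤ => ℂ) 2) j, f.2⟩ :
        lp (fun _ : ℤ => ℂ) 2)
      map_add' := by
        intro f g
        ext j
        simp [lp.coeFn_add, mul_add]
        rfl
      map_smul' := by
        intro c f
        ext j
        simp [lp.coeFn_smul, Pi.smul_apply, smul_eq_mul]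
        ring }

end

/-! Since `D ε_c = c ε_c` and `⟪ε_r, D h⟫ = r ⟪ε_r, h⟫`, the `(r, c)` entry of `i (D z - z D)` is
`i (r - c)` times that of `z`; induction on `k` gives the power. -/

local notation "ℓ²(ℤ)" => lp (fun _ : ℤ => ℂ) 2

lemma diagOp_apply (h : diagOp.domain) (j : ℤ) :
    (diagOp h : ℓ²(ℤ)) j = (j : ℂ) * (h : ℓ²(ℤ)) j :=
  rfl

lemma int_mul_lp_single (c j : ℤ) (a : ℂ) :
    (j : ℂ) * (lp.single 2 c a : ℓ²(ℤ)) j = (c : ℂ) * (lp.single 2 c a : ℓ²(ℤ)) j := by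
  rcases eq_or_ne j c with rfl | hj
  · rfl
  · simp [lp.single_apply, hj]

lemma lp_single_mem_diagDomain (c : ℤ) (a : ℂ) :
    (lp.single 2 c a : ℓ²(ℤ)) ∈ diagOp.domain := by
  change Memℓp (fun j : ℤ => (j : ℂ) * (lp.single 2 c a : ℓ²(ℤ)) j) 2
  simp only [int_mul_lp_single c _ a]
  exact (lp.memℓp _).const_mul _

lemma diagOp_lp_single (c : ℤ) (a : ℂ) :
    diagOp ⟨lp.single 2 c a, lp_single_mem_diagDomain c a⟩
      = (c : ℂ) • (lp.single 2 c a : ℓ²(ℤ)) := by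
  ext j
  rw [diagOp_apply, int_mul_lp_single, lp.coeFn_smul, Pi.smul_apply, smul_eq_mul]

lemma inner_lp_single_diagOp (r : ℤ) (a : ℂ) (h : diagOp.domain) :
    ⟪lp.single 2 r a, diagOp h⟫_ℂ = (r : ℂ) * ⟪lp.single 2 r a, (h : ℓ²(ℤ))⟫_ℂ := by
  rw [lp.inner_single_left, lp.inner_single_left, diagOp_apply]
  simp only [RCLike.inner_apply]
  ring

lemma inner_lp_single_of_weak_commutator (z w : ℓ²(ℤ) →L[ℂ] ℓ²(ℤ))
    (hz : ∀ h : diagOp.domain, z h ∈ diagOp.domain)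
    (hw : ∀ h : diagOp.domain, w h = Complex.I • (diagOp ⟨z h, hz h⟩ - z (diagOp h)))
    (r c : ℤ) (a b : ℂ) :
    ⟪lp.single 2 r a, w (lp.single 2 c b)⟫_ℂ
      = Complex.I * ((r : ℂ) - (c : ℂ)) * ⟪lp.single 2 r a, z (lp.single 2 c b)⟫_ℂ := by
  rw [hw ⟨_, lp_single_mem_diagDomain c b⟩, inner_smul_right, inner_sub_right,
    inner_lp_single_diagOp, diagOp_lp_single, map_smul, inner_smul_right]
  ring

/-- **Example 2.9(b) of the paper (matrix entries of iterated weak derivatives).** Let `D` be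
the diagonal operator `(D f) j = j • f j` on `ℓ²(ℤ)` and let `x` be `n`-times weakly
`D`-differentiable with iterated weak derivatives `y k = (δ^D_w)^k(x)`.  Then for every
`k ≤ n` and all `r, c ∈ ℤ`, the matrix entries satisfy
`⟨(δ^D_w)^k(x) ε_c, ε_r⟩ = (i (r - c))^k ⟨x ε_c, ε_r⟩` (here `⟪ε_r, z⟫_ℂ` is the `r`-th
matrix coefficient of `z`, Mathlib's inner product being conjugate-linear in the first slot). -/
theorem iter_weak_derivative_matrix_entries (n : ℕ)
    (x : lp (fun _ : ℤ => ℂ) 2 →L[ℂ] lp (fun _ : ℤ => ℂ) 2)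
    (y : ℕ → (lp (fun _ : ℤ => ℂ) 2 →L[ℂ] lp (fun _ : ℤ => ℂ) 2))
    (hy0 : y 0 = x)
    (hmap : ∀ k, k < n → ∀ h : diagOp.domain, y k h ∈ diagOp.domain)
    (hder : ∀ k (hk : k < n) (h : diagOp.domain),
      y (k + 1) ((h : lp (fun _ : ℤ => ℂ) 2))
        = Complex.I • (diagOp ⟨y k h, hmap k hk h⟩ - y k (diagOp h))) :
    ∀ k, k ≤ n → ∀ r c : ℤ,
      ⟪lp.single 2 r (1 : ℂ), y k (lp.single 2 c 1)⟫_ℂ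
        = (Complex.I * ((r : ℂ) - (c : ℂ))) ^ k
            * ⟪lp.single 2 r (1 : ℂ), x (lp.single 2 c 1)⟫_ℂ := by
  intro k
  induction k with
  | zero => simp [hy0]
  | succ k ih =>
    intro hk r c
    rw [inner_lp_single_of_weak_commutator (y k) (y (k + 1)) (hmap k hk) (hder k hk),
      ih (Nat.le_of_succ_le hk), pow_succ']
    ring
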